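/- arXiv:2011.10712 — 2 statements merged into one kernel-verified Lean document; each statement's English description precedes it below -/
import Mathlib

section
/- Let z : 2^[n] → ℝ be monotone nondecreasing and submodular, let h : [n] → ℝ be positive costs, and let I, I* ⊆ [n] with z(I*) = z([n]). If j ∈ [n] satisfies (z(I∪{j}) − z(I))/h(j) ≥ (1−ε)·(z(I∪{j'}) − z(I))/h(j') for all j' ∈ I* \ I (where 0 < ε < 1), then (z(I∪{j}) − z(I))/h(j) ≥ (1−ε)·(z(I*) − z(I))/h(I*), where h(I*) = ∑_{i∈I*} h(i). -/
/-!
Let `θ` be the density of `j`. Each `j' ∈ I* \ I` has `(1 - ε)`-scaled density at most `θ`, so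
summing the cleared inequalities gives `(1 - ε) ∑ (z(I ∪ {j'}) - z(I)) ≤ θ h(I* \ I) ≤ θ h(I*)`.
By submodularity the sum of marginal gains is at least `z(I ∪ I*) - z(I)`, and
`z(I ∪ I*) = z(I*)` because `z` is monotone and `I*` already attains the maximum `z([n])`.
Monotonicity also gives `θ ≥ 0`, which covers `h(I*) = 0`, where the right-hand side is `0`.
-/

open Finset

theorem Monotone.map_sup_eq_of_map_eq_top {α β : Type*} [SemilatticeSup α] [OrderTop α]
    [PartialOrder β] {f : α → β} (hf : Monotone f) {b : α} (hb : f b = f ⊤) (a : α) :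
    f (a ⊔ b) = f b :=
  le_antisymm (hb ▸ hf le_top) (hf le_sup_right)

theorem Finset.mul_sum_le_mul_sum_of_mul_div_le {ι K : Type*} [Field K] [LinearOrder K]
    [IsStrictOrderedRing K] (s : Finset ι) {a w : ι → K} {c θ : K}
    (hw : ∀ i ∈ s, 0 < w i) (h : ∀ i ∈ s, c * (a i / w i) ≤ θ) :
    c * ∑ i ∈ s, a i ≤ θ * ∑ i ∈ s, w i := by
  rw [mul_sum, mul_sum]
  refine sum_le_sum fun i hi => ?_
  have hi' := h i hi
  rwa [← mul_div_assoc, div_le_iff₀ (hw i hi)] at hi'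

theorem stmt_10_general {n : ℕ}
    (z : Finset (Fin n) → ℝ)
    (hmono : ∀ X Y : Finset (Fin n), X ⊆ Y → z X ≤ z Y)
    (hsub : ∀ X Y : Finset (Fin n),
      ∑ j ∈ Y \ X, (z (insert j X) - z X) ≥ z (X ∪ Y) - z X)
    (h : Fin n → ℝ) (hpos : ∀ i, 0 < h i)
    (I Istar : Finset (Fin n)) (hopt : z Istar = z Finset.univ)
    (ε : ℝ) (hε1 : ε < 1)
    (j : Fin n)
    (hj : ∀ j' ∈ Istar \ I,
      (z (insert j I) - z I) / h j ≥
        (1 - ε) * ((z (insert j' I) - z I) / h j')) :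
    (z (insert j I) - z I) / h j ≥
      (1 - ε) * ((z Istar - z I) / (∑ i ∈ Istar, h i)) := by
  set θ := (z (insert j I) - z I) / h j
  have hz : Monotone z := fun X Y hXY => hmono X Y hXY
  have hθ : 0 ≤ θ := div_nonneg (sub_nonneg.2 (hz (subset_insert j I))) (hpos j).le
  have hgain : z Istar - z I ≤ ∑ j' ∈ Istar \ I, (z (insert j' I) - z I) := by
    have hsubI := hsub I Istar
    rwa [← sup_eq_union, hz.map_sup_eq_of_map_eq_top (by rwa [top_eq_univ]) I] at hsubI
  have hcleared : (1 - ε) * (z Istar - z I) ≤ θ * ∑ j' ∈ Istar \ I, h j' :=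
    (mul_le_mul_of_nonneg_left hgain (by linarith)).trans
      ((Istar \ I).mul_sum_le_mul_sum_of_mul_div_le (fun i _ => hpos i) hj)
  have hH : ∑ j' ∈ Istar \ I, h j' ≤ ∑ i ∈ Istar, h i :=
    sum_le_sum_of_subset_of_nonneg sdiff_subset fun i _ _ => (hpos i).le
  have hH0 : 0 ≤ ∑ i ∈ Istar, h i := sum_nonneg fun i _ => (hpos i).le
  rw [ge_iff_le, ← mul_div_assoc]
  exact div_le_of_le_mul₀ hH0 hθ (hcleared.trans (mul_le_mul_of_nonneg_left hH hθ))

theorem stmt_10 {n : ℕ} (hn : 0 < n)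
    (z : Finset (Fin n) → ℝ)
    (hmono : ∀ X Y : Finset (Fin n), X ⊆ Y → z X ≤ z Y)
    (hsub : ∀ X Y : Finset (Fin n),
      ∑ j ∈ Y \ X, (z (insert j X) - z X) ≥ z (X ∪ Y) - z X)
    (h : Fin n → ℝ) (hpos : ∀ i, 0 < h i)
    (I Istar : Finset (Fin n)) (hopt : z Istar = z Finset.univ)
    (ε : ℝ) (hε0 : 0 < ε) (hε1 : ε < 1)
    (j : Fin n)
    (hj : ∀ j' ∈ Istar \ I,
      (z (insert j I) - z I) / h j ≥
        (1 - ε) * ((z (insert j' I) - z I) / h j')) :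
    (z (insert j I) - z I) / h j ≥
      (1 - ε) * ((z Istar - z I) / (∑ i ∈ Istar, h i)) :=
  stmt_10_general z hmono hsub h hpos I Istar hopt ε hε1 j hj
end

section
/- Let z : 2^[n] → ℝ≥0 be monotone nondecreasing and submodular with z(∅) = 0, h : [n] → ℝ>0 costs, and I* ⊆ [n] with z(I*) = z([n]) > 0. Suppose a sequence ∅ = I_0 ⊂ I_1 ⊂ … ⊂ I_T with I_{t+1} = I_t ∪ {j_{t+1}} satisfies the recursion z(I*) − z(I_{t+1}) ≤ (1 − (1−ε)h(j_{t+1})/h(I*))·(z(I*) − z(I_t)) for each t < T−1, and z(I_{T−1}) < z([n]). Then h(I_{T−1}) ≤ (1/(1−ε))·ln( z([n]) / (z([n]) − z(I_{T−1})) )·h(I*). -/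
theorem stmt_11 {n : ℕ} (hn : 0 < n) (ε : ℝ) (hε0 : 0 < ε) (hε1 : ε < 1)
    (z : Finset (Fin n) → ℝ) (hnonneg : ∀ I, 0 ≤ z I)
    (hmono : ∀ X Y : Finset (Fin n), X ⊆ Y → z X ≤ z Y)
    (hsub : ∀ X Y : Finset (Fin n), X ⊆ Y → ∀ j ∉ Y,
      z (insert j X) - z X ≥ z (insert j Y) - z Y)
    (hempty : z ∅ = 0)
    (h : Fin n → ℝ) (hpos : ∀ i, 0 < h i)
    (Istar : Finset (Fin n)) (hopt : z Istar = z Finset.univ)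
    (hoptpos : 0 < z Finset.univ)
    (T : ℕ) (hT : 1 ≤ T)
    (I : ℕ → Finset (Fin n)) (J : ℕ → Fin n)
    (hI0 : I 0 = ∅)
    (hstep : ∀ t < T, I (t + 1) = insert (J t) (I t) ∧ J t ∉ I t)
    (hrec : ∀ t, t + 1 ≤ T - 1 →
      z Istar - z (I (t + 1)) ≤
        (1 - (1 - ε) * h (J t) / (∑ i ∈ Istar, h i)) * (z Istar - z (I t)))
    (hcost : ∀ t < T, (1 - ε) * h (J t) ≤ ∑ i ∈ Istar, h i)
    (hlast : z (I (T - 1)) < z Finset.univ) :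
    ∑ i ∈ I (T - 1), h i ≤
      (1 / (1 - ε)) *
        Real.log (z Finset.univ / (z Finset.univ - z (I (T - 1)))) *
        (∑ i ∈ Istar, h i) := by
  set H := ∑ i ∈ Istar, h i with hHdef
  have hIstar_ne : Istar.Nonempty := by
    rcases Finset.eq_empty_or_nonempty Istar with he | hne
    · exfalso; rw [he, hempty] at hopt; linarith
    · exact hne
  have hH : 0 < H := Finset.sum_pos (fun i _ => hpos i) hIstar_ne
  have h1ε : (0:ℝ) < 1 - ε := by linarith
  set x : ℕ → ℝ := fun s => (1 - ε) * h (J s) / H with hxdef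
  have hx0 : ∀ s, 0 ≤ x s := fun s =>
    div_nonneg (mul_nonneg h1ε.le (hpos _).le) hH.le
  have hx1 : ∀ s < T, x s ≤ 1 := fun s hs => (div_le_one hH).mpr (hcost s hs)
  have hsum : ∀ t, t ≤ T → ∑ i ∈ I t, h i = ∑ s ∈ Finset.range t, h (J s) := by
    intro t
    induction t with
    | zero => intro _; simp [hI0]
    | succ t ih =>
      intro hle
      obtain ⟨hins, hnot⟩ := hstep t (by omega)
      rw [hins, Finset.sum_insert hnot, ih (by omega), Finset.sum_range_succ]
      ring
  have hprod : ∀ t, t ≤ T - 1 →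
      z Istar - z (I t) ≤ z Istar * ∏ s ∈ Finset.range t, (1 - x s) := by
    intro t
    induction t with
    | zero => intro _; simp [hI0, hempty]
    | succ t ih =>
      intro hle
      have ht : t < T := by omega
      have h1x : 0 ≤ 1 - x t := by have := hx1 t ht; linarith
      have hprodnn : 0 ≤ ∏ s ∈ Finset.range t, (1 - x s) := by
        apply Finset.prod_nonneg; intro s hs
        have := hx1 s (by have := Finset.mem_range.mp hs; omega); linarith
      calc z Istar - z (I (t+1)) ≤ (1 - x t) * (z Istar - z (I t)) := hrec t hle
        _ ≤ (1 - x t) * (z Istar * ∏ s ∈ Finset.range t, (1 - x s)) :=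
            mul_le_mul_of_nonneg_left (ih (by omega)) h1x
        _ = z Istar * ∏ s ∈ Finset.range (t+1), (1 - x s) := by
            rw [Finset.prod_range_succ]; ring
  set S := ∑ s ∈ Finset.range (T-1), x s with hSdef
  set A := z Istar with hAdef
  have hA : 0 < A := lt_of_lt_of_eq hoptpos hopt.symm
  have hD : 0 < A - z (I (T-1)) := by linarith
  have hexp : ∏ s ∈ Finset.range (T-1), (1 - x s) ≤ Real.exp (-S) := by
    have h1 : ∏ s ∈ Finset.range (T-1), (1 - x s) ≤
        ∏ s ∈ Finset.range (T-1), Real.exp (-x s) := by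
      apply Finset.prod_le_prod
      · intro s hs
        have := hx1 s (by have := Finset.mem_range.mp hs; omega); linarith
      · intro s hs
        have := Real.add_one_le_exp (-x s); linarith
    calc _ ≤ ∏ s ∈ Finset.range (T-1), Real.exp (-x s) := h1
      _ = Real.exp (∑ s ∈ Finset.range (T-1), -x s) := (Real.exp_sum _ _).symm
      _ = Real.exp (-S) := by rw [hSdef, Finset.sum_neg_distrib]
  have hmain : A - z (I (T-1)) ≤ A * Real.exp (-S) := by
    calc A - z (I (T-1)) ≤ A * ∏ s ∈ Finset.range (T-1), (1 - x s) :=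
          hprod (T-1) le_rfl
      _ ≤ A * Real.exp (-S) := mul_le_mul_of_nonneg_left hexp hA.le
  have hexpS : Real.exp S * (A - z (I (T-1))) ≤ A := by
    have := mul_le_mul_of_nonneg_left hmain (Real.exp_pos S).le
    calc Real.exp S * (A - z (I (T-1))) ≤ Real.exp S * (A * Real.exp (-S)) := this
      _ = A * (Real.exp S * Real.exp (-S)) := by ring
      _ = A := by rw [← Real.exp_add]; simp
  have hlog : S ≤ Real.log (A / (A - z (I (T-1)))) := by
    rw [Real.le_log_iff_exp_le (div_pos hA hD)]
    rw [le_div_iff₀ hD]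
    exact hexpS
  have hSval : S = (1 - ε) * (∑ s ∈ Finset.range (T-1), h (J s)) / H := by
    rw [hSdef, hxdef]
    rw [Finset.mul_sum, Finset.sum_div]
  have hgoalsum : ∑ i ∈ I (T-1), h i = ∑ s ∈ Finset.range (T-1), h (J s) :=
    hsum (T-1) (by omega)
  rw [← hopt, hgoalsum]
  set P := ∑ s ∈ Finset.range (T-1), h (J s) with hPdef
  have hPS : (1 - ε) * P = S * H := by
    rw [hSval]; field_simp
  set L := Real.log (A / (A - z (I (T-1)))) with hLdef
  have hLH : S * H ≤ L * H := mul_le_mul_of_nonneg_right hlog hH.le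
  rw [div_mul_eq_mul_div, div_mul_eq_mul_div, le_div_iff₀ h1ε]
  calc P * (1 - ε) = S * H := by linarith [hPS]
    _ ≤ L * H := hLH
    _ = 1 * L * H := by ring
end
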